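/- arXiv:2003.05605 — 2 statements merged into one kernel-verified Lean document; each statement's English description precedes it below -/
import Mathlib

section
/- For every integer n ≥ 3, the ordered pair (Q_{n+1}, AC_n) is a duality pair in the homomorphism order of oriented graphs: an oriented graph G admits a homomorphism to AC_n if and only if Q_{n+1} does not admit a homomorphism to G. -/
/-- A homomorphism of digraphs (binary relations) is an arc-preserving vertex map. -/
def Hom {α : Type*} {β : Type*} (A : α → α → Prop) (B : β → β → Prop) (f : α → β) : Prop :=
  ∀ u v, A u v → B (f u) (f v)

/-- `A` admits a homomorphism to `B`. -/
def HomTo {α : Type*} {β : Type*} (A : α → α → Prop) (B : β → β → Prop) : Prop :=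
  ∃ f : α → β, Hom A B f

/-- Homomorphic equivalence of digraphs. -/
def HomEquiv {α : Type*} {β : Type*} (A : α → α → Prop) (B : β → β → Prop) : Prop :=
  HomTo A B ∧ HomTo B A

/-- An oriented graph: no symmetric arcs (in particular, no loops). -/
def IsOriented {α : Type*} (G : α → α → Prop) : Prop := ∀ u v, G u v → ¬ G v u

/-- A digraph is (weakly) connected: any two vertices are joined by a semi-walk. -/
def Conn {α : Type*} (G : α → α → Prop) : Prop :=
  ∀ u v : α, Relation.ReflTransGen (fun a b => G a b ∨ G b a) u v

/-- Direction of the `i`-th arc (between `q i` and `q (i+1)`) of the oriented path `Q n`: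
the first two arcs are forward, the middle section `(q 1, …, q (n-2))` alternates
(so its arcs `1 ≤ i ≤ n-3` are forward iff `i` is odd), and the last two arcs agree
in direction. -/
def QForward (n i : ℕ) : Prop :=
  i = 0 ∨ i = 1 ∨ (i + 3 ≤ n ∧ Odd i) ∨ (i = n - 2 ∧ Even n)

/-- The oriented path `Q n` on vertex set `Fin n`. -/
def QArc (n : ℕ) (u v : Fin n) : Prop :=
  ((v : ℕ) = (u : ℕ) + 1 ∧ QForward n (u : ℕ)) ∨
  ((u : ℕ) = (v : ℕ) + 1 ∧ ¬ QForward n (v : ℕ))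

/-- The oriented cycle `AC n` on vertex set `Fin n`, obtained by identifying the endpoints
of the alternating path on `n+1` vertices beginning with a forward arc: the arc between
`a i` and `a ((i+1) % n)` is forward iff `i` is even. -/
def ACArc (n : ℕ) (u v : Fin n) : Prop :=
  ((v : ℕ) = ((u : ℕ) + 1) % n ∧ Even (u : ℕ)) ∨
  ((u : ℕ) = ((v : ℕ) + 1) % n ∧ ¬ Even (v : ℕ))

/-- The directed path on `k` vertices. -/
def DiPath (k : ℕ) (u v : Fin k) : Prop := (v : ℕ) = (u : ℕ) + 1

/-- The transitive tournament on `k` vertices. -/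
def TT (k : ℕ) (u v : Fin k) : Prop := u < v

/-- `(A, B)` is a duality pair: for every digraph `G`, `A → G` iff `G ↛ B`. -/
def DualityPair {α : Type*} {β : Type*} (A : α → α → Prop) (B : β → β → Prop) : Prop :=
  ∀ (W : Type) (G : W → W → Prop), HomTo A G ↔ ¬ HomTo G B

/-- `o` is an orientation of the undirected graph `G`: every arc of `o` lies on an edge
of `G`, and every edge of `G` gets exactly one of the two directions. -/
def IsOrientationOf {V : Type*} (o : V → V → Prop) (G : SimpleGraph V) : Prop :=
  (∀ u v, o u v → G.Adj u v) ∧ ∀ u v, G.Adj u v → Xor' (o u v) (o v u)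

/-- The undirected cycle on `k` vertices. -/
def UCycle (k : ℕ) : SimpleGraph (Fin k) :=
  SimpleGraph.fromRel (fun u v => (v : ℕ) = ((u : ℕ) + 1) % k)

/-!
For even `n`, `Q (n+1)` is homomorphically equivalent to the directed path with two arcs and
`AC n` to a single arc, so the statement reduces to the duality of that pair.

For odd `n`, the only directed 2-path of `AC n` is `n-1 → 0 → 1`; a homomorphism from `Q (n+1)`
would have to send both of its directed 2-paths there, but the alternating zigzag between them
advances at most one vertex of the cycle per arc and is too short to get around. Conversely, if
`Q (n+1)` does not map to `G`, send each vertex of `G` to `AC n` according to the first position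
at which an initial segment of `Q (n+1)` can end on it. Backtracking along the alternating middle
of `Q (n+1)` pushes any even position up to `n-1`, so vertices at even positions have no
out-arcs, and this makes the map a homomorphism.
-/

theorem HomTo.trans {α β γ : Type*} {A : α → α → Prop} {B : β → β → Prop}
    {C : γ → γ → Prop} (hAB : HomTo A B) (hBC : HomTo B C) : HomTo A C := by
  obtain ⟨f, hf⟩ := hAB
  obtain ⟨g, hg⟩ := hBC
  exact ⟨g ∘ f, fun u v h => hg _ _ (hf u v h)⟩

theorem DualityPair.of_homEquiv {α α' β β' : Type*} {A : α → α → Prop} {A' : α' → α' → Prop}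
    {B : β → β → Prop} {B' : β' → β' → Prop} (h : DualityPair A B) (hA : HomEquiv A' A)
    (hB : HomEquiv B' B) : DualityPair A' B' := by
  intro W G
  have hAG : HomTo A' G ↔ HomTo A G := ⟨hA.2.trans, hA.1.trans⟩
  have hGB : HomTo G B' ↔ HomTo G B := ⟨fun h => h.trans hB.1, fun h => h.trans hB.2⟩
  rw [hAG, hGB]
  exact h W G

theorem dualityPair_of_forall_homTo {α β : Type*} {A : α → α → Prop} {B : β → β → Prop}
    (hAB : ¬ HomTo A B) (h : ∀ (W : Type) (G : W → W → Prop), ¬ HomTo A G → HomTo G B) :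
    DualityPair A B :=
  fun W G => ⟨fun hA hB => hAB (hA.trans hB), fun hB => by_contra fun hA => hB (h W G hA)⟩

section Paths

variable {W : Type*} (dir : ℕ → Prop) (G : W → W → Prop)

def StepAlong (i : ℕ) (u w : W) : Prop := (dir i ∧ G u w) ∨ (¬ dir i ∧ G w u)

/-- The initial segment with `i` arcs of the oriented path whose `j`-th arc is forward iff
`dir j` maps to `G` with its last vertex at `w`. -/
def PathEnd : ℕ → W → Prop
  | 0, _ => True
  | i + 1, w => ∃ u, PathEnd i u ∧ StepAlong dir G i u w

variable {dir G}

theorem stepAlong_of_pos {i : ℕ} {u w : W} (hd : dir i) : StepAlong dir G i u w ↔ G u w := by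
  simp [StepAlong, hd]

theorem stepAlong_of_neg {i : ℕ} {u w : W} (hd : ¬ dir i) : StepAlong dir G i u w ↔ G w u := by
  simp [StepAlong, hd]

theorem pathEnd_iff_exists_walk {i : ℕ} {w : W} :
    PathEnd dir G i w ↔ ∃ f : ℕ → W, f i = w ∧ ∀ j < i, StepAlong dir G j (f j) (f (j + 1)) := by
  constructor
  · induction i generalizing w with
    | zero => exact fun _ => ⟨fun _ => w, rfl, fun j hj => absurd hj (Nat.not_lt_zero j)⟩
    | succ i ih =>
      rintro ⟨u, hu, hstep⟩
      obtain ⟨f, rfl, hf⟩ := ih hu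
      refine ⟨Function.update f (i + 1) w, by simp, fun j hj => ?_⟩
      rw [Function.update_of_ne (by omega)]
      rcases Nat.lt_succ_iff_lt_or_eq.1 hj with hj | rfl
      · rw [Function.update_of_ne (by omega)]
        exact hf j hj
      · rwa [Function.update_self]
  · rintro ⟨f, rfl, hf⟩
    induction i with
    | zero => trivial
    | succ i ih => exact ⟨f i, ih fun j hj => hf j (by omega), hf i (by omega)⟩

theorem homTo_qArc_iff_exists_walk {k : ℕ} :
    HomTo (QArc (k + 1)) G ↔
      ∃ f : ℕ → W, ∀ j < k, StepAlong (QForward (k + 1)) G j (f j) (f (j + 1)) := by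
  constructor
  · rintro ⟨g, hg⟩
    refine ⟨fun j => g ⟨min j k, by omega⟩, fun j hj => ?_⟩
    simp only [min_eq_left hj.le, min_eq_left (Nat.succ_le_of_lt hj)]
    by_cases hd : QForward (k + 1) j
    · exact Or.inl ⟨hd, hg _ _ (Or.inl ⟨rfl, hd⟩)⟩
    · exact Or.inr ⟨hd, hg _ _ (Or.inr ⟨rfl, hd⟩)⟩
  · rintro ⟨f, hf⟩
    refine ⟨fun i => f i, ?_⟩
    rintro u v (⟨huv, hd⟩ | ⟨hvu, hd⟩)
    · have := (stepAlong_of_pos hd).1 (hf u (by omega))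
      rwa [← huv] at this
    · have := (stepAlong_of_neg hd).1 (hf v (by omega))
      rwa [← hvu] at this

theorem homTo_qArc_iff_exists_pathEnd {k : ℕ} :
    HomTo (QArc (k + 1)) G ↔ ∃ w, PathEnd (QForward (k + 1)) G k w := by
  simp only [homTo_qArc_iff_exists_walk, pathEnd_iff_exists_walk]
  exact ⟨fun ⟨f, hf⟩ => ⟨f k, f, rfl, hf⟩, fun ⟨_, f, _, hf⟩ => ⟨f, hf⟩⟩

theorem PathEnd.exists_of_le {i j : ℕ} {w : W} (h : PathEnd dir G i w) (hji : j ≤ i) :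
    ∃ u, PathEnd dir G j u := by
  induction hji generalizing w with
  | refl => exact ⟨w, h⟩
  | step _ ih =>
    obtain ⟨u, hu, _⟩ := h
    exact ih hu

/-- Walking back along arc `m` and forward again is a legal continuation when the directions
of arcs `m`, `m + 1`, `m + 2` alternate. -/
theorem PathEnd.add_two {m : ℕ} {w : W} (h : PathEnd dir G (m + 1) w)
    (h₁ : dir (m + 1) ↔ ¬ dir m) (h₂ : dir (m + 2) ↔ dir m) : PathEnd dir G (m + 3) w := by
  obtain ⟨u, hu, hstep⟩ := h
  have hback : StepAlong dir G (m + 1) w u := by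
    unfold StepAlong at hstep ⊢
    rw [h₁]
    tauto
  have hforth : StepAlong dir G (m + 2) u w := by
    unfold StepAlong at hstep ⊢
    rwa [h₂]
  exact ⟨u, ⟨w, ⟨u, hu, hstep⟩, hback⟩, hforth⟩

end Paths

theorem qForward_iff_odd {N i : ℕ} (hi : 1 ≤ i) (hiN : i + 3 ≤ N) : QForward N i ↔ Odd i := by
  unfold QForward
  constructor
  · rintro (h | rfl | ⟨-, h⟩ | ⟨h, -⟩)
    · omega
    · exact odd_one
    · exact h
    · omega
  · exact fun h => Or.inr (Or.inr (Or.inl ⟨hiN, h⟩))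

theorem qForward_of_add_two {N i : ℕ} (hN : Even N) (hi : i + 2 = N) : QForward N i :=
  Or.inr (Or.inr (Or.inr ⟨by omega, hN⟩))

theorem homTo_diPath_three {W : Type*} {G : W → W → Prop} {u v w : W} (huv : G u v)
    (hvw : G v w) : HomTo (DiPath 3) G := by
  refine ⟨![u, v, w], fun i j hij => ?_⟩
  unfold DiPath at hij
  fin_cases i <;> fin_cases j <;> simp_all

theorem dualityPair_diPath_three_diPath_two : DualityPair (DiPath 3) (DiPath 2) := by
  refine dualityPair_of_forall_homTo ?_ fun W G hG => ?_
  · rintro ⟨f, hf⟩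
    have h01 := hf 0 1 rfl
    have h12 := hf 1 2 rfl
    have := (f 2).isLt
    unfold DiPath at h01 h12
    omega
  · classical
    refine ⟨fun w => if ∃ x, G w x then 0 else 1, fun u v huv => ?_⟩
    have hu : ∃ x, G u x := ⟨v, huv⟩
    have hv : ¬ ∃ x, G v x := fun ⟨x, hvx⟩ => hG (homTo_diPath_three huv hvx)
    simp [DiPath, hu, hv]

theorem homEquiv_qArc_diPath_three {n : ℕ} (hn : 3 ≤ n) (hev : Even n) :
    HomEquiv (QArc (n + 1)) (DiPath 3) := by
  constructor
  · -- the levels of the vertices of `Q (n+1)` above its two sources `q 0` and `q n`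
    refine ⟨fun i => if (i : ℕ) = 0 ∨ (i : ℕ) = n then 0 else if Odd (i : ℕ) then 1 else 2, ?_⟩
    rintro u v (⟨huv, hd⟩ | ⟨hvu, hd⟩) <;>
    · have := u.isLt
      have := v.isLt
      simp only [QForward, Nat.odd_iff, Nat.even_iff] at hd hev
      simp only [DiPath, Nat.odd_iff]
      split_ifs <;> simp <;> omega
  · refine ⟨fun i => ⟨i, by omega⟩, fun i j hij => Or.inl ⟨hij, ?_⟩⟩
    have := j.isLt
    unfold DiPath at hij
    show QForward (n + 1) i
    exact (show (i : ℕ) = 0 ∨ (i : ℕ) = 1 by omega).imp_right Or.inl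

theorem homEquiv_acArc_diPath_two {n : ℕ} (hn : 2 ≤ n) (hev : Even n) :
    HomEquiv (ACArc n) (DiPath 2) := by
  constructor
  · refine ⟨fun i => ⟨i % 2, Nat.mod_lt _ two_pos⟩, fun u v huv => ?_⟩
    have := u.isLt
    have := v.isLt
    simp only [ACArc, Nat.even_iff] at huv hev
    simp only [DiPath]
    rcases huv with ⟨h, hu⟩ | ⟨h, hv⟩
    · rw [Nat.mod_eq_of_lt (by omega)] at h
      omega
    · rcases Nat.lt_or_ge ((v : ℕ) + 1) n with hlt | hge
      · rw [Nat.mod_eq_of_lt hlt] at h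
        omega
      · rw [show (v : ℕ) + 1 = n by omega, Nat.mod_self] at h
        omega
  · refine ⟨fun i => ⟨i, by omega⟩, fun i j hij => Or.inl ⟨?_, ?_⟩⟩
    · have := j.isLt
      unfold DiPath at hij
      simp only [hij]
      rw [Nat.mod_eq_of_lt (by omega)]
    · have := j.isLt
      unfold DiPath at hij
      have : (i : ℕ) = 0 := by omega
      simp [this]

theorem dualityPair_qArc_acArc_of_even {n : ℕ} (hn : 3 ≤ n) (hev : Even n) :
    DualityPair (QArc (n + 1)) (ACArc n) :=
  dualityPair_diPath_three_diPath_two.of_homEquiv (homEquiv_qArc_diPath_three hn hev)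
    (homEquiv_acArc_diPath_two (by omega) hev)

section OddCycle

variable {n : ℕ}

theorem acArc_iff (hodd : Odd n) {a b : Fin n} :
    ACArc n a b ↔ ((b : ℕ) = a + 1 ∧ Even (a : ℕ)) ∨ ((a : ℕ) = b + 1 ∧ Odd (b : ℕ)) ∨
      ((a : ℕ) = n - 1 ∧ (b : ℕ) = 0) := by
  have hsucc : ∀ x < n, ((x + 1) % n = x + 1 ∧ x + 1 < n) ∨ ((x + 1) % n = 0 ∧ x + 1 = n) := by
    intro x hx
    rcases Nat.lt_or_ge (x + 1) n with h | h
    · exact Or.inl ⟨Nat.mod_eq_of_lt h, h⟩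
    · exact Or.inr ⟨by rw [show x + 1 = n by omega, Nat.mod_self], by omega⟩
  have ha := hsucc a a.isLt
  have hb := hsucc b b.isLt
  simp only [ACArc, Nat.even_iff, Nat.odd_iff] at hodd ⊢
  omega

theorem acArc_twoPath (hn : 1 < n) (hodd : Odd n) {a b c : Fin n} (hab : ACArc n a b)
    (hbc : ACArc n b c) : (b : ℕ) = 0 ∧ (c : ℕ) = 1 := by
  rw [acArc_iff hodd] at hab hbc
  simp only [Nat.even_iff, Nat.odd_iff] at hab hbc hodd
  omega

theorem qWalk_acArc_bound (hodd : Odd n) {f : ℕ → Fin n}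
    (hf : ∀ j < n, StepAlong (QForward (n + 1)) (ACArc n) j (f j) (f (j + 1)))
    (hstart : (f 2 : ℕ) = 1) {i : ℕ} (hi : 2 ≤ i) (hin : i ≤ n - 1) :
    (f i : ℕ) < i ∧ ((f i : ℕ) = 0 → Odd i) := by
  induction i, hi using Nat.le_induction with
  | base => simp [hstart]
  | succ i hi ih =>
    have h := hf i (by omega)
    have ih := ih (by omega)
    simp only [StepAlong, qForward_iff_odd (N := n + 1) (i := i) (by omega) (by omega),
      acArc_iff hodd, Nat.even_iff, Nat.odd_iff] at h ih hodd ⊢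
    omega

theorem not_homTo_qArc_acArc_of_odd (hn : 3 ≤ n) (hodd : Odd n) :
    ¬ HomTo (QArc (n + 1)) (ACArc n) := by
  rw [homTo_qArc_iff_exists_walk]
  rintro ⟨f, hf⟩
  have fwd : ∀ j < n, QForward (n + 1) j → ACArc n (f j) (f (j + 1)) :=
    fun j hj hd => (stepAlong_of_pos hd).1 (hf j hj)
  have hstart : (f 2 : ℕ) = 1 :=
    (acArc_twoPath (by omega) hodd (fwd 0 (by omega) (Or.inl rfl))
      (fwd 1 (by omega) (Or.inr (Or.inl rfl)))).2
  have hend : (f (n - 1) : ℕ) = 0 := by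
    have h₁ := fwd (n - 2) (by omega) ((qForward_iff_odd (by omega) (by omega)).2
      (Nat.odd_iff.2 (by have := Nat.odd_iff.1 hodd; omega)))
    have h₂ := fwd (n - 1) (by omega) (qForward_of_add_two hodd.add_one (by omega))
    rw [show n - 2 + 1 = n - 1 by omega] at h₁
    exact (acArc_twoPath (by omega) hodd h₁ h₂).1
  have hodd' := (qWalk_acArc_bound hodd hf hstart (by omega) le_rfl).2 hend
  rw [Nat.odd_iff] at hodd hodd'
  omega

variable {W : Type*} {G : W → W → Prop}

variable (n G) in
def evenLevels (w : W) : Set ℕ := {i | 2 ≤ i ∧ Even i ∧ PathEnd (QForward (n + 1)) G i w}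

variable (n G) in
def oddLevels (w : W) : Set ℕ := {i | Odd i ∧ (PathEnd (QForward (n + 1)) G i w ∨ i = n)}

open Classical in
variable (n G) in
/-- The vertices of level `i` go to vertex `i - 1` of `AC n`. The level is the least even
`i ≥ 2` at which a prefix of `Q (n + 1)` can end, failing that the least such odd `i`, with `n`
standing for "none". -/
noncomputable def level (w : W) : ℕ :=
  if (evenLevels n G w).Nonempty then sInf (evenLevels n G w) else sInf (oddLevels n G w)

theorem mem_oddLevels_self (hodd : Odd n) {w : W} : n ∈ oddLevels n G w :=
  ⟨hodd, Or.inr rfl⟩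

theorem pathEnd_lt (noQ : ¬ HomTo (QArc (n + 1)) G) {i : ℕ} {w : W}
    (h : PathEnd (QForward (n + 1)) G i w) : i < n := by
  by_contra hi
  exact noQ (homTo_qArc_iff_exists_pathEnd.2 (h.exists_of_le (not_lt.1 hi)))

theorem pathEnd_sub_one_of_even (hodd : Odd n) (noQ : ¬ HomTo (QArc (n + 1)) G) {i : ℕ} {w : W}
    (hi : 2 ≤ i) (hev : Even i) (h : PathEnd (QForward (n + 1)) G i w) :
    PathEnd (QForward (n + 1)) G (n - 1) w := by
  have hin := pathEnd_lt noQ h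
  obtain ⟨k, hk⟩ : ∃ k, i + 2 * k = n - 1 := by
    refine ⟨(n - 1 - i) / 2, ?_⟩
    rw [Nat.even_iff] at hev
    rw [Nat.odd_iff] at hodd
    omega
  induction k generalizing i with
  | zero => simpa [← hk] using h
  | succ k ih =>
    obtain ⟨m, rfl⟩ : ∃ m, i = m + 1 := ⟨i - 1, by omega⟩
    have hdir : ∀ j, 1 ≤ j → j ≤ m + 2 → (QForward (n + 1) j ↔ Odd j) :=
      fun j hj hjm => qForward_iff_odd hj (by omega)
    have h₁ : QForward (n + 1) (m + 1) ↔ ¬ QForward (n + 1) m := by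
      rw [hdir (m + 1) (by omega) (by omega), hdir m (by omega) (by omega), Nat.odd_add_one]
    have h₂ : QForward (n + 1) (m + 2) ↔ QForward (n + 1) m := by
      rw [hdir (m + 2) (by omega) le_rfl, hdir m (by omega) (by omega), Nat.odd_add]
      simp
    have h' := h.add_two h₁ h₂
    exact ih (by omega) (by rw [Nat.even_iff] at hev ⊢; omega) h' (pathEnd_lt noQ h') (by omega)

theorem evenLevels_eq_empty (hodd : Odd n) (noQ : ¬ HomTo (QArc (n + 1)) G) {u v : W}
    (huv : G u v) : evenLevels n G u = ∅ := by
  refine Set.eq_empty_iff_forall_notMem.2 fun i ⟨hi, hev, h⟩ => noQ ?_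
  have := hodd.pos
  have hq : QForward (n + 1) (n - 1) := qForward_of_add_two hodd.add_one (by omega)
  have hv : PathEnd (QForward (n + 1)) G (n - 1 + 1) v :=
    ⟨u, pathEnd_sub_one_of_even hodd noQ hi hev h, (stepAlong_of_pos hq).2 huv⟩
  rw [Nat.sub_add_cancel hodd.pos] at hv
  exact homTo_qArc_iff_exists_pathEnd.2 ⟨v, hv⟩

theorem mem_evenLevels_of_mem_oddLevels (hodd : Odd n) {u v : W} (huv : G u v) {i : ℕ}
    (hi : i ∈ oddLevels n G u) (hin : i < n) : i + 1 ∈ evenLevels n G v := by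
  obtain ⟨hi, h | rfl⟩ := hi
  · have hq := (qForward_iff_odd (N := n + 1) hi.pos (by
      rw [Nat.odd_iff] at hi hodd; omega)).2 hi
    exact ⟨by have := hi.pos; omega, hi.add_one, u, h, (stepAlong_of_pos hq).2 huv⟩
  · exact absurd hin (lt_irrefl _)

theorem mem_oddLevels_of_mem_evenLevels {u v : W} (huv : G u v) {i : ℕ}
    (hi : i ∈ evenLevels n G v) (hin : i + 1 < n) : i + 1 ∈ oddLevels n G u := by
  obtain ⟨hi, hev, h⟩ := hi
  have hq : ¬ QForward (n + 1) i := by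
    rw [qForward_iff_odd (by omega) (by rw [Nat.even_iff] at hev; omega)]
    exact Nat.not_odd_iff_even.2 hev
  exact ⟨hev.add_one, Or.inl ⟨v, h, (stepAlong_of_neg hq).2 huv⟩⟩

theorem level_arc (hodd : Odd n) (noQ : ¬ HomTo (QArc (n + 1)) G) {u v : W}
    (huv : G u v) :
    (level n G v = level n G u + 1 ∧ Odd (level n G u)) ∨
      (level n G u = level n G v + 1 ∧ Even (level n G v)) ∨
      (level n G u = n ∧ level n G v = 1) := by
  have hnO := mem_oddLevels_self (G := G) (w := u) hodd
  have hoO := Nat.sInf_mem ⟨n, hnO⟩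
  have hon : sInf (oddLevels n G u) ≤ n := Nat.sInf_le hnO
  have hlu : level n G u = sInf (oddLevels n G u) := by
    simp [level, evenLevels_eq_empty hodd noQ huv]
  by_cases hE : (evenLevels n G v).Nonempty
  · obtain ⟨he2, he, hpe⟩ := Nat.sInf_mem hE
    have hlv : level n G v = sInf (evenLevels n G v) := if_pos hE
    have hen := pathEnd_lt noQ hpe
    have h₁ : sInf (evenLevels n G v) + 1 < n →
        sInf (oddLevels n G u) ≤ sInf (evenLevels n G v) + 1 :=
      fun h => Nat.sInf_le (mem_oddLevels_of_mem_evenLevels huv (Nat.sInf_mem hE) h)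
    have h₂ : sInf (oddLevels n G u) < n →
        sInf (evenLevels n G v) ≤ sInf (oddLevels n G u) + 1 :=
      fun h => Nat.sInf_le (mem_evenLevels_of_mem_oddLevels hodd huv hoO h)
    have ho := hoO.1
    rw [hlu, hlv]
    simp only [Nat.even_iff, Nat.odd_iff] at ho he hodd ⊢
    omega
  · have h1 : 1 ∈ oddLevels n G v :=
      ⟨odd_one, Or.inl ⟨u, trivial, (stepAlong_of_pos (Or.inl rfl)).2 huv⟩⟩
    have hv := (Nat.sInf_mem ⟨1, h1⟩).1.pos
    have hv1 : sInf (oddLevels n G v) ≤ 1 := Nat.sInf_le h1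
    have hun : ¬ sInf (oddLevels n G u) < n :=
      fun h => hE ⟨_, mem_evenLevels_of_mem_oddLevels hodd huv hoO h⟩
    have hlv : level n G v = sInf (oddLevels n G v) := if_neg hE
    rw [hlu, hlv]
    omega

theorem level_mem_Icc (hodd : Odd n) (noQ : ¬ HomTo (QArc (n + 1)) G) (w : W) :
    level n G w ∈ Set.Icc 1 n := by
  unfold level
  split_ifs with hE
  · obtain ⟨h2, -, h⟩ := Nat.sInf_mem hE
    exact ⟨by omega, (pathEnd_lt noQ h).le⟩
  · obtain ⟨ho, -⟩ := Nat.sInf_mem ⟨n, mem_oddLevels_self (G := G) (w := w) hodd⟩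
    exact ⟨ho.pos, Nat.sInf_le (mem_oddLevels_self hodd)⟩

theorem homTo_acArc_of_odd (hodd : Odd n) (noQ : ¬ HomTo (QArc (n + 1)) G) :
    HomTo G (ACArc n) := by
  refine ⟨fun w => ⟨level n G w - 1, by obtain ⟨h₁, h₂⟩ := level_mem_Icc hodd noQ w; omega⟩,
    fun u v huv => ?_⟩
  have hu := level_mem_Icc hodd noQ u
  have hv := level_mem_Icc hodd noQ v
  have harc := level_arc hodd noQ huv
  rw [acArc_iff hodd]
  simp only [Set.mem_Icc, Nat.even_iff, Nat.odd_iff] at hu hv harc hodd ⊢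
  omega

end OddCycle

theorem dualityPair_qArc_acArc_of_odd {n : ℕ} (hn : 3 ≤ n) (hodd : Odd n) :
    DualityPair (QArc (n + 1)) (ACArc n) :=
  dualityPair_of_forall_homTo (not_homTo_qArc_acArc_of_odd hn hodd)
    fun _ _ noQ => homTo_acArc_of_odd hodd noQ

/-- For every `n ≥ 3`, `(Q (n+1), AC n)` is a duality pair in the homomorphism order of
oriented graphs: an oriented graph `G` maps to `AC n` iff `Q (n+1)` does not map to `G`. -/
theorem stmt13 (n : ℕ) (hn : 3 ≤ n) :
    ∀ (W : Type) (G : W → W → Prop), IsOriented G →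
      (HomTo G (ACArc n) ↔ ¬ HomTo (QArc (n + 1)) G) := by
  intro W G _
  have hdual : DualityPair (QArc (n + 1)) (ACArc n) := by
    rcases Nat.even_or_odd n with hev | hodd
    · exact dualityPair_qArc_acArc_of_even hn hev
    · exact dualityPair_qArc_acArc_of_odd hn hodd
  exact iff_not_comm.1 (hdual W G)
end

section
/- Let n ≥ 5 be odd and G an oriented graph. Then Q_{n+1} admits a homomorphism to G if and only if there exists an even integer l with 4 ≤ l ≤ n+1 and a semi-walk in G following the same arc pattern as Q_l. -/
theorem qForward_iff (m i : ℕ) : QForward m i ↔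
    i = 0 ∨ i = 1 ∨ (i + 3 ≤ m ∧ i % 2 = 1) ∨ (i = m - 2 ∧ m % 2 = 0) := by
  rw [QForward, Nat.odd_iff, Nat.even_iff]

theorem homTo_qArc_iff {W : Type*} (G : W → W → Prop) {m : ℕ} (hm : 0 < m) :
    HomTo (QArc m) G ↔ ∃ w : ℕ → W, ∀ i, i + 2 ≤ m →
      (QForward m i → G (w i) (w (i + 1))) ∧ (¬ QForward m i → G (w (i + 1)) (w i)) := by
  constructor
  · rintro ⟨f, hf⟩
    refine ⟨fun i => f ⟨i % m, Nat.mod_lt _ hm⟩, fun i hi => ?_⟩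
    have hi₀ : i % m = i := Nat.mod_eq_of_lt (by omega)
    have hi₁ : (i + 1) % m = i + 1 := Nat.mod_eq_of_lt (by omega)
    exact ⟨fun hq => hf _ _ (Or.inl ⟨by simp [hi₀, hi₁], by simpa [hi₀] using hq⟩),
      fun hq => hf _ _ (Or.inr ⟨by simp [hi₀, hi₁], by simpa [hi₀] using hq⟩)⟩
  · rintro ⟨w, hw⟩
    refine ⟨fun v => w v, ?_⟩
    rintro u v (⟨huv, hq⟩ | ⟨huv, hq⟩)
    · simpa only [huv] using (hw u (by omega)).1 hq
    · simpa only [huv] using (hw v (by omega)).2 hq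

def qFold (l m i : ℕ) : ℕ :=
  if i ≤ l - 3 then i else if i + 1 = m then l - 1 else if Even i then l - 2 else l - 3

theorem qFold_lt {l m i : ℕ} (hl : 0 < l) (hi : i < m) : qFold l m i < l := by
  unfold qFold
  split_ifs <;> omega

theorem homTo_qArc_of_even {l m : ℕ} (hl : Even l) (hm : Even m) (h4 : 4 ≤ l) (hlm : l ≤ m) :
    HomTo (QArc m) (QArc l) := by
  refine ⟨fun i => ⟨qFold l m i, qFold_lt (by omega) i.isLt⟩, ?_⟩
  rw [Nat.even_iff] at hl hm
  rintro ⟨u, hu⟩ ⟨v, hv⟩ huv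
  simp only [QArc, qFold, qForward_iff, Nat.even_iff] at huv ⊢
  split_ifs <;> omega

theorem stmt14_general (n : ℕ) (hodd : Odd n) (hn : 5 ≤ n) {W : Type*} (G : W → W → Prop) :
    HomTo (QArc (n + 1)) G ↔
      ∃ l, Even l ∧ 4 ≤ l ∧ l ≤ n + 1 ∧
        ∃ w : ℕ → W, ∀ i, i + 2 ≤ l →
          (QForward l i → G (w i) (w (i + 1))) ∧
          (¬ QForward l i → G (w (i + 1)) (w i)) := by
  constructor
  · intro h
    exact ⟨n + 1, hodd.add_one, by omega, le_rfl, (homTo_qArc_iff G (by omega)).1 h⟩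
  · rintro ⟨l, hl, h4, hln, hw⟩
    exact (homTo_qArc_of_even hl hodd.add_one h4 hln).trans ((homTo_qArc_iff G (by omega)).2 hw)

/-- Let `n ≥ 5` be odd and `G` an oriented graph. Then `Q (n+1) → G` iff there is an even
`l` with `4 ≤ l ≤ n + 1` and a semi-walk in `G` following the arc pattern of `Q l`. -/
theorem stmt14 (n : ℕ) (hodd : Odd n) (hn : 5 ≤ n) {W : Type*} (G : W → W → Prop)
    (hor : IsOriented G) :
    HomTo (QArc (n + 1)) G ↔
      ∃ l, Even l ∧ 4 ≤ l ∧ l ≤ n + 1 ∧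
        ∃ w : ℕ → W, ∀ i, i + 2 ≤ l →
          (QForward l i → G (w i) (w (i + 1))) ∧
          (¬ QForward l i → G (w (i + 1)) (w i)) :=
  stmt14_general n hodd hn G
end
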